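/- arXiv:2601.19280 — 3 statements merged into one kernel-verified Lean document; each statement's English description precedes it below -/
import Mathlib

section
/- Fix n ≥ 2, R > 0, ε > 0, G > 0. Let r = (r_1,…,r_n) ∈ [0, R]^n and let s_1,…,s_n ∈ ℝ^d satisfy ‖s_j‖₂ ≤ G for all j. Define r̄ = (1/n) Σ_j r_j, σ = sqrt( (1/n) Σ_j (r_j − r̄)² ), A_j = (r_j − r̄)/(σ + ε), and ĝ(r, s) = (1/n) Σ_{j=1}^n A_j s_j ∈ ℝ^d. Let (r', s') be obtained from (r, s) by replacing a single coordinate k: r'_k ∈ [0, R] and ‖s'_k‖₂ ≤ G, with r'_j = r_j and s'_j = s_j for j ≠ k. Then ‖ĝ(r, s) − ĝ(r', s')‖₂ ≤ (G/n) ( 3R²/ε² + 5R/ε ). -/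
open Real Finset

/-- Sample mean of rewards. -/
noncomputable def sampleMean {n : ℕ} (r : Fin n → ℝ) : ℝ := (∑ j, r j) / n

/-- (Biased) sample standard deviation of rewards. -/
noncomputable def sampleStd {n : ℕ} (r : Fin n → ℝ) : ℝ :=
  Real.sqrt ((∑ j, (r j - sampleMean r) ^ 2) / n)

/-- Standardized advantage `A_j = (r_j − r̄)/(σ + ε)`. -/
noncomputable def advantage {n : ℕ} (ε : ℝ) (r : Fin n → ℝ) (j : Fin n) : ℝ :=
  (r j - sampleMean r) / (sampleStd r + ε)

/-- GRPO per-prompt gradient estimator `ĝ(r, s) = (1/n) ∑_j A_j s_j`. -/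
noncomputable def grpoGrad {n d : ℕ} (ε : ℝ) (r : Fin n → ℝ)
    (s : Fin n → EuclideanSpace ℝ (Fin d)) : EuclideanSpace ℝ (Fin d) :=
  (n : ℝ)⁻¹ • ∑ j, advantage ε r j • s j

section Aux

variable {n : ℕ}

lemma aux_mean_mem (hn : 0 < n) {R : ℝ} (r : Fin n → ℝ)
    (hr : ∀ j, r j ∈ Set.Icc (0 : ℝ) R) : sampleMean r ∈ Set.Icc (0 : ℝ) R := by
  have hn' : (0 : ℝ) < n := by exact_mod_cast hn
  constructor
  · exact div_nonneg (Finset.sum_nonneg fun j _ => (hr j).1) hn'.le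
  · rw [sampleMean, div_le_iff₀ hn']
    calc (∑ j, r j) ≤ ∑ _j : Fin n, R := Finset.sum_le_sum fun j _ => (hr j).2
      _ = R * n := by simp [Finset.card_univ, mul_comm]

lemma aux_sq_sampleStd (hn : 0 < n) (r : Fin n → ℝ) :
    sampleStd r ^ 2 = (∑ j, (r j - sampleMean r) ^ 2) / n := by
  have hn' : (0 : ℝ) < n := by exact_mod_cast hn
  rw [sampleStd, Real.sq_sqrt]
  exact div_nonneg (Finset.sum_nonneg fun j _ => sq_nonneg _) hn'.le

/-- Cauchy–Schwarz: `∑ |r j − m| ≤ n σ`. -/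
lemma aux_sum_abs_le (hn : 0 < n) (r : Fin n → ℝ) :
    ∑ j, |r j - sampleMean r| ≤ n * sampleStd r := by
  have hn' : (0 : ℝ) < n := by exact_mod_cast hn
  have hcs := Finset.sum_mul_sq_le_sq_mul_sq Finset.univ
    (fun j => |r j - sampleMean r|) (fun _ => (1 : ℝ))
  simp only [mul_one, one_pow, Finset.sum_const, Finset.card_univ, Fintype.card_fin,
    nsmul_eq_mul, sq_abs] at hcs
  have h1 : (∑ j, |r j - sampleMean r|) ^ 2 ≤ (n * sampleStd r) ^ 2 := by
    have hss := aux_sq_sampleStd hn r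
    calc (∑ j, |r j - sampleMean r|) ^ 2 ≤ (∑ j, (r j - sampleMean r) ^ 2) * n := hcs
      _ = (n * sampleStd r) ^ 2 := by rw [mul_pow, hss]; field_simp
  have h2 : (0 : ℝ) ≤ ∑ j, |r j - sampleMean r| :=
    Finset.sum_nonneg fun j _ => abs_nonneg _
  have h3 : (0 : ℝ) ≤ n * sampleStd r := mul_nonneg hn'.le (Real.sqrt_nonneg _)
  exact (pow_le_pow_iff_left₀ h2 h3 two_ne_zero).mp h1

/-- Variance expansion. -/
lemma aux_var_form (hn : 0 < n) (q : Fin n → ℝ) :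
    ∑ j, (q j - sampleMean q) ^ 2 = ∑ j, (q j) ^ 2 - n * (sampleMean q) ^ 2 := by
  have hn' : (0 : ℝ) < n := by exact_mod_cast hn
  have hq : ∑ j, q j = n * sampleMean q := by
    rw [sampleMean]; field_simp
  calc ∑ j, (q j - sampleMean q) ^ 2
      = ∑ j, ((q j) ^ 2 - 2 * sampleMean q * q j + sampleMean q ^ 2) := by
        exact Finset.sum_congr rfl fun j _ => by ring
    _ = ((∑ j, (q j) ^ 2) - 2 * sampleMean q * (∑ j, q j)) + n * sampleMean q ^ 2 := by
        rw [Finset.sum_add_distrib, Finset.sum_sub_distrib, ← Finset.mul_sum]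
        simp [Finset.card_univ]
    _ = ∑ j, (q j) ^ 2 - n * (sampleMean q) ^ 2 := by rw [hq]; ring

end Aux

set_option maxHeartbeats 1600000 in
/-- Bounded differences for the normalized GRPO prompt-gradient
estimator: replacing a single rollout `(r_k, s_k)` changes `ĝ` by at most
`(G/n) (3R²/ε² + 5R/ε)` in Euclidean norm. -/
theorem grpoGrad_bounded_differences {n d : ℕ} (hn : 2 ≤ n)
    (R ε G : ℝ) (hR : 0 < R) (hε : 0 < ε) (hG : 0 < G)
    (r r' : Fin n → ℝ) (s s' : Fin n → EuclideanSpace ℝ (Fin d))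
    (hr : ∀ j, r j ∈ Set.Icc (0 : ℝ) R) (hr' : ∀ j, r' j ∈ Set.Icc (0 : ℝ) R)
    (hs : ∀ j, ‖s j‖ ≤ G) (hs' : ∀ j, ‖s' j‖ ≤ G)
    (k : Fin n) (hrk : ∀ j, j ≠ k → r' j = r j) (hsk : ∀ j, j ≠ k → s' j = s j) :
    ‖grpoGrad ε r s - grpoGrad ε r' s'‖ ≤
      (G / n) * (3 * R ^ 2 / ε ^ 2 + 5 * R / ε) := by
  have hn0 : 0 < n := by omega
  have hn' : (0 : ℝ) < n := by exact_mod_cast hn0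
  obtain ⟨m, hm_def⟩ : ∃ m, m = sampleMean r := ⟨_, rfl⟩
  obtain ⟨m', hm'_def⟩ : ∃ m', m' = sampleMean r' := ⟨_, rfl⟩
  obtain ⟨σ, hσ_def⟩ : ∃ x, x = sampleStd r := ⟨_, rfl⟩
  obtain ⟨σ', hσ'_def⟩ : ∃ x, x = sampleStd r' := ⟨_, rfl⟩
  have hσ0 : 0 ≤ σ := hσ_def ▸ Real.sqrt_nonneg _
  have hσ'0 : 0 ≤ σ' := hσ'_def ▸ Real.sqrt_nonneg _
  have hσε : 0 < σ + ε := by linarith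
  have hσ'ε : 0 < σ' + ε := by linarith
  have hm : m ∈ Set.Icc (0 : ℝ) R := hm_def ▸ aux_mean_mem hn0 r hr
  have hm' : m' ∈ Set.Icc (0 : ℝ) R := hm'_def ▸ aux_mean_mem hn0 r' hr'
  -- mean difference
  have hsumdiff : (∑ j, r j) - (∑ j, r' j) = r k - r' k := by
    rw [← Finset.sum_sub_distrib, Finset.sum_eq_single k]
    · intro j _ hj; rw [hrk j hj]; ring
    · intro h; exact absurd (Finset.mem_univ k) h
  have hmdiff : m - m' = (r k - r' k) / n := by
    rw [hm_def, hm'_def, sampleMean, sampleMean, div_sub_div_same, hsumdiff]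
  have habs_rk : |r k - r' k| ≤ R := by
    rcases hr k with ⟨h1, h2⟩; rcases hr' k with ⟨h3, h4⟩
    rw [abs_le]; constructor <;> linarith
  have habs_mdiff : |m - m'| ≤ R / n := by
    rw [hmdiff, abs_div, abs_of_pos hn']; gcongr
  -- sum-of-squares difference
  have hsqdiff : (∑ j, (r j) ^ 2) - (∑ j, (r' j) ^ 2) = r k ^ 2 - r' k ^ 2 := by
    rw [← Finset.sum_sub_distrib, Finset.sum_eq_single k]
    · intro j _ hj; rw [hrk j hj]; ring
    · intro h; exact absurd (Finset.mem_univ k) h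
  have hSdiff : |(∑ j, (r j - sampleMean r) ^ 2) - (∑ j, (r' j - sampleMean r') ^ 2)|
      ≤ 3 * R ^ 2 := by
    rw [aux_var_form hn0 r, aux_var_form hn0 r']
    have hmm : (n : ℝ) * ((sampleMean r) ^ 2 - (sampleMean r') ^ 2)
        = (r k - r' k) * (sampleMean r + sampleMean r') := by
      rw [← hm_def, ← hm'_def,
        show m ^ 2 - m' ^ 2 = (m - m') * (m + m') by ring, hmdiff]
      field_simp
    have hE : ((∑ j, (r j) ^ 2) - n * (sampleMean r) ^ 2)
        - ((∑ j, (r' j) ^ 2) - n * (sampleMean r') ^ 2)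
        = (r k ^ 2 - r' k ^ 2) - (r k - r' k) * (sampleMean r + sampleMean r') := by
      linear_combination hsqdiff - hmm
    rw [hE]
    have h1 : |r k ^ 2 - r' k ^ 2| ≤ R ^ 2 := by
      rcases hr k with ⟨a1, a2⟩; rcases hr' k with ⟨b1, b2⟩
      rw [abs_le]; constructor <;> nlinarith
    have h2 : |(r k - r' k) * (sampleMean r + sampleMean r')| ≤ R * (2 * R) := by
      rw [abs_mul]
      have hmp : |sampleMean r + sampleMean r'| ≤ 2 * R := by
        rw [← hm_def, ← hm'_def, abs_le]
        exact ⟨by linarith [hm.1, hm'.1], by linarith [hm.2, hm'.2]⟩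
      exact mul_le_mul habs_rk hmp (abs_nonneg _) hR.le
    calc |(r k ^ 2 - r' k ^ 2) - (r k - r' k) * (sampleMean r + sampleMean r')|
        ≤ |r k ^ 2 - r' k ^ 2| + |(r k - r' k) * (sampleMean r + sampleMean r')| :=
          abs_sub _ _
      _ ≤ 3 * R ^ 2 := by linarith
  -- std product bound
  have hstd : σ * |σ - σ'| ≤ 3 * R ^ 2 / n := by
    have e1 : |σ ^ 2 - σ' ^ 2| = |σ - σ'| * (σ + σ') := by
      rw [show σ ^ 2 - σ' ^ 2 = (σ - σ') * (σ + σ') by ring, abs_mul,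
        abs_of_nonneg (show (0 : ℝ) ≤ σ + σ' by linarith)]
    have e2 : |σ ^ 2 - σ' ^ 2| ≤ 3 * R ^ 2 / n := by
      rw [hσ_def, hσ'_def, aux_sq_sampleStd hn0 r, aux_sq_sampleStd hn0 r',
        div_sub_div_same, abs_div, abs_of_pos hn']
      gcongr
    nlinarith [abs_nonneg (σ - σ'), mul_nonneg hσ'0 (abs_nonneg (σ - σ'))]
  -- advantage bounds
  have hA_bound : ∀ (q : Fin n → ℝ), (∀ j, q j ∈ Set.Icc (0 : ℝ) R) →
      ∀ j, |advantage ε q j| ≤ R / ε := by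
    intro q hq j
    rcases hq j with ⟨a1, a2⟩
    rcases aux_mean_mem hn0 q hq with ⟨b1, b2⟩
    have hstd0 : 0 ≤ sampleStd q := Real.sqrt_nonneg _
    rw [advantage, abs_div,
      abs_of_pos (show (0 : ℝ) < sampleStd q + ε by linarith)]
    refine div_le_div₀ hR.le ?_ hε (by linarith)
    rw [abs_le]; exact ⟨by linarith, by linarith⟩
  have hAdiff : ∀ j, j ≠ k →
      |advantage ε r j - advantage ε r' j|
        ≤ |r j - m| * (|σ - σ'| / ε ^ 2) + R / (n * ε) := by
    intro j hj
    have hrj : r' j = r j := hrk j hj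
    have key : advantage ε r j - advantage ε r' j
        = (r j - m) * (σ' - σ) / ((σ + ε) * (σ' + ε)) + (m' - m) / (σ' + ε) := by
      rw [advantage, advantage, hrj, ← hm_def, ← hm'_def, ← hσ_def, ← hσ'_def]
      field_simp
      ring
    rw [key]
    have hb1 : |(r j - m) * (σ' - σ) / ((σ + ε) * (σ' + ε))|
        ≤ |r j - m| * (|σ - σ'| / ε ^ 2) := by
      calc |(r j - m) * (σ' - σ) / ((σ + ε) * (σ' + ε))|
          = |r j - m| * |σ' - σ| / |(σ + ε) * (σ' + ε)| := by
            rw [abs_div, abs_mul]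
        _ = |r j - m| * |σ' - σ| / ((σ + ε) * (σ' + ε)) := by
            rw [abs_of_pos (mul_pos hσε hσ'ε)]
        _ ≤ |r j - m| * |σ' - σ| / (ε * ε) := by
            gcongr |r j - m| * |σ' - σ| / ?_
            exact mul_le_mul (by linarith) (by linarith) hε.le hσε.le
        _ = |r j - m| * (|σ - σ'| / ε ^ 2) := by
            rw [abs_sub_comm σ' σ]; ring
    have hb2 : |(m' - m) / (σ' + ε)| ≤ R / (n * ε) := by
      rw [abs_div, abs_of_pos hσ'ε, abs_sub_comm]
      calc |m - m'| / (σ' + ε) ≤ (R / n) / ε :=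
            div_le_div₀ (by positivity) habs_mdiff hε (by linarith)
        _ = R / (n * ε) := by rw [div_div]
    calc |(r j - m) * (σ' - σ) / ((σ + ε) * (σ' + ε)) + (m' - m) / (σ' + ε)|
        ≤ |(r j - m) * (σ' - σ) / ((σ + ε) * (σ' + ε))| + |(m' - m) / (σ' + ε)| :=
          abs_add_le _ _
      _ ≤ |r j - m| * (|σ - σ'| / ε ^ 2) + R / (n * ε) := add_le_add hb1 hb2
  -- term bounds
  have hTk : ‖advantage ε r k • s k - advantage ε r' k • s' k‖ ≤ 2 * G * R / ε := by
    calc ‖advantage ε r k • s k - advantage ε r' k • s' k‖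
        ≤ ‖advantage ε r k • s k‖ + ‖advantage ε r' k • s' k‖ := norm_sub_le _ _
      _ = |advantage ε r k| * ‖s k‖ + |advantage ε r' k| * ‖s' k‖ := by
          rw [norm_smul, norm_smul, Real.norm_eq_abs, Real.norm_eq_abs]
      _ ≤ (R / ε) * G + (R / ε) * G := add_le_add
          (mul_le_mul (hA_bound r hr k) (hs k) (norm_nonneg _) (by positivity))
          (mul_le_mul (hA_bound r' hr' k) (hs' k) (norm_nonneg _) (by positivity))
      _ = 2 * G * R / ε := by ring
  have hTj : ∀ j, j ≠ k → ‖advantage ε r j • s j - advantage ε r' j • s' j‖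
      ≤ G * (|r j - m| * (|σ - σ'| / ε ^ 2)) + G * (R / (n * ε)) := by
    intro j hj
    rw [hsk j hj, ← sub_smul, norm_smul, Real.norm_eq_abs]
    calc |advantage ε r j - advantage ε r' j| * ‖s j‖
        ≤ (|r j - m| * (|σ - σ'| / ε ^ 2) + R / (n * ε)) * G :=
          mul_le_mul (hAdiff j hj) (hs j) (norm_nonneg _) (by positivity)
      _ = G * (|r j - m| * (|σ - σ'| / ε ^ 2)) + G * (R / (n * ε)) := by ring
  -- sum bound
  have hsum_bound : ∑ j, ‖advantage ε r j • s j - advantage ε r' j • s' j‖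
      ≤ 2 * G * R / ε + (G * (3 * R ^ 2 / ε ^ 2) + G * (R / ε)) := by
    rw [← Finset.add_sum_erase Finset.univ _ (Finset.mem_univ k)]
    apply add_le_add hTk
    calc ∑ j ∈ Finset.univ.erase k, ‖advantage ε r j • s j - advantage ε r' j • s' j‖
        ≤ ∑ j ∈ Finset.univ.erase k,
            (G * (|r j - m| * (|σ - σ'| / ε ^ 2)) + G * (R / (n * ε))) :=
          Finset.sum_le_sum fun j hj => hTj j (Finset.ne_of_mem_erase hj)
      _ = G * ((∑ j ∈ Finset.univ.erase k, |r j - m|) * (|σ - σ'| / ε ^ 2))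
          + ((Finset.univ.erase k).card : ℝ) * (G * (R / (n * ε))) := by
          rw [Finset.sum_add_distrib, Finset.sum_const, nsmul_eq_mul]
          congr 1
          rw [← Finset.mul_sum, Finset.sum_mul]
      _ ≤ G * (3 * R ^ 2 / ε ^ 2) + G * (R / ε) := by
          apply add_le_add
          · apply mul_le_mul_of_nonneg_left _ hG.le
            have h4 : ∑ j ∈ Finset.univ.erase k, |r j - m| ≤ n * σ := by
              refine le_trans (Finset.sum_le_sum_of_subset_of_nonneg
                (Finset.subset_univ _) fun j _ _ => abs_nonneg _) ?_
              rw [hm_def, hσ_def]; exact aux_sum_abs_le hn0 r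
            have h5 : (∑ j ∈ Finset.univ.erase k, |r j - m|) * |σ - σ'|
                ≤ 3 * R ^ 2 := by
              calc (∑ j ∈ Finset.univ.erase k, |r j - m|) * |σ - σ'|
                  ≤ (n * σ) * |σ - σ'| := mul_le_mul_of_nonneg_right h4 (abs_nonneg _)
                _ = n * (σ * |σ - σ'|) := by ring
                _ ≤ n * (3 * R ^ 2 / n) := mul_le_mul_of_nonneg_left hstd hn'.le
                _ = 3 * R ^ 2 := by field_simp
            calc (∑ j ∈ Finset.univ.erase k, |r j - m|) * (|σ - σ'| / ε ^ 2)
                = ((∑ j ∈ Finset.univ.erase k, |r j - m|) * |σ - σ'|) / ε ^ 2 := by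
                  ring
              _ ≤ 3 * R ^ 2 / ε ^ 2 := by gcongr
          · have hcard : ((Finset.univ.erase k).card : ℝ) ≤ n := by
              have h6 : (Finset.univ.erase k).card ≤ n := by
                refine le_trans Finset.card_erase_le ?_
                simp [Finset.card_univ]
              exact_mod_cast h6
            calc ((Finset.univ.erase k).card : ℝ) * (G * (R / (n * ε)))
                ≤ n * (G * (R / (n * ε))) :=
                  mul_le_mul_of_nonneg_right hcard (by positivity)
              _ = G * (R / ε) := by field_simp
  -- put it together
  have hg : grpoGrad ε r s - grpoGrad ε r' s'
      = (n : ℝ)⁻¹ • ∑ j, (advantage ε r j • s j - advantage ε r' j • s' j) := by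
    rw [grpoGrad, grpoGrad, ← smul_sub, ← Finset.sum_sub_distrib]
  have hnorm : ‖grpoGrad ε r s - grpoGrad ε r' s'‖
      ≤ (n : ℝ)⁻¹ * (2 * G * R / ε + (G * (3 * R ^ 2 / ε ^ 2) + G * (R / ε))) := by
    rw [hg, norm_smul, Real.norm_eq_abs, abs_of_pos (by positivity)]
    exact mul_le_mul_of_nonneg_left (le_trans (norm_sum_le _ _) hsum_bound)
      (by positivity)
  refine le_trans hnorm ?_
  have heq : (n : ℝ)⁻¹ * (2 * G * R / ε + (G * (3 * R ^ 2 / ε ^ 2) + G * (R / ε)))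
      = (G / n) * (3 * R ^ 2 / ε ^ 2 + 3 * R / ε) := by
    field_simp; ring
  rw [heq]
  refine mul_le_mul_of_nonneg_left ?_ (by positivity)
  have h7 : 3 * R / ε ≤ 5 * R / ε := by
    rw [div_le_div_iff₀ hε hε]; nlinarith
  linarith
end

section
/- Fix n ≥ 2, R > 0, ε > 0. Let r = (r_1,…,r_n) ∈ [0, R]^n and let r' ∈ [0, R]^n differ from r in exactly one coordinate. Define r̄ = (1/n) Σ_j r_j, σ = sqrt( (1/n) Σ_j (r_j − r̄)² ), A_j = (r_j − r̄)/(σ + ε), and analogously r̄', σ', A'_j from r'. Then the total change in standardized advantages satisfies Σ_{j=1}^n |A_j − A'_j| ≤ 3R²/ε² + 3R/ε. -/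
open Real Finset

lemma sampleMean_mem {n : ℕ} {R : ℝ} (hn : 0 < n) (r : Fin n → ℝ)
    (hr : ∀ j, r j ∈ Set.Icc (0:ℝ) R) : sampleMean r ∈ Set.Icc (0:ℝ) R := by
  have hn' : (0:ℝ) < n := by exact_mod_cast hn
  constructor
  · exact div_nonneg (Finset.sum_nonneg fun j _ => (hr j).1) hn'.le
  · rw [sampleMean, div_le_iff₀ hn']
    calc ∑ j, r j ≤ ∑ _j : Fin n, R := Finset.sum_le_sum fun j _ => (hr j).2
      _ = R * n := by simp [Finset.sum_const, mul_comm]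

lemma sampleStd_sq {n : ℕ} (r : Fin n → ℝ) :
    sampleStd r ^ 2 = (∑ j, (r j - sampleMean r) ^ 2) / n :=
  Real.sq_sqrt (by positivity)

lemma variance_identity {n : ℕ} (hn : 0 < n) (x : Fin n → ℝ) :
    ∑ j, (x j - sampleMean x) ^ 2 = ∑ j, (x j) ^ 2 - n * (sampleMean x) ^ 2 := by
  have hn' : (0:ℝ) < n := by exact_mod_cast hn
  have hsum : ∑ j, x j = n * sampleMean x := by
    rw [sampleMean, mul_div_cancel₀ _ hn'.ne']
  calc ∑ j, (x j - sampleMean x) ^ 2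
      = ∑ j, ((x j) ^ 2 - 2 * sampleMean x * x j + sampleMean x ^ 2) := by
        apply Finset.sum_congr rfl; intros; ring
    _ = ∑ j, (x j) ^ 2 - 2 * sampleMean x * (∑ j, x j) + n * sampleMean x ^ 2 := by
        rw [Finset.sum_add_distrib, Finset.sum_sub_distrib, ← Finset.mul_sum,
          Finset.sum_const, nsmul_eq_mul, Finset.card_univ, Fintype.card_fin]
    _ = ∑ j, (x j) ^ 2 - n * sampleMean x ^ 2 := by rw [hsum]; ring

lemma sum_abs_le_card_mul_std {n : ℕ} (hn : 0 < n) (x : Fin n → ℝ) :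
    ∑ j, |x j - sampleMean x| ≤ n * sampleStd x := by
  have hn' : (0:ℝ) < n := by exact_mod_cast hn
  have hs0 : 0 ≤ sampleStd x := Real.sqrt_nonneg _
  have hCS := Finset.sum_mul_sq_le_sq_mul_sq Finset.univ (fun _ => (1:ℝ))
    (fun j => |x j - sampleMean x|)
  simp only [one_mul, one_pow, Finset.sum_const, nsmul_eq_mul, Finset.card_univ,
    Fintype.card_fin, sq_abs] at hCS
  have hsumsq : ∑ j, (x j - sampleMean x) ^ 2 = n * sampleStd x ^ 2 := by
    rw [sampleStd_sq, mul_div_cancel₀ _ hn'.ne']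
  rw [hsumsq] at hCS
  have h2 : (∑ j, |x j - sampleMean x|) ^ 2 ≤ (n * sampleStd x) ^ 2 := by nlinarith
  have h1 : 0 ≤ ∑ j, |x j - sampleMean x| :=
    Finset.sum_nonneg fun j _ => abs_nonneg _
  exact (pow_le_pow_iff_left₀ h1 (by positivity) two_ne_zero).mp h2

/-- If `r, r' ∈ [0, R]^n` differ in exactly one coordinate, then the
total change in standardized advantages satisfies
`∑_j |A_j − A'_j| ≤ 3R²/ε² + 3R/ε`. -/
theorem advantage_total_change_bound {n : ℕ} (hn : 2 ≤ n)
    (R ε : ℝ) (hR : 0 < R) (hε : 0 < ε)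
    (r r' : Fin n → ℝ)
    (hr : ∀ j, r j ∈ Set.Icc (0 : ℝ) R) (hr' : ∀ j, r' j ∈ Set.Icc (0 : ℝ) R)
    (k : Fin n) (hk : r' k ≠ r k) (hrk : ∀ j, j ≠ k → r' j = r j) :
    ∑ j, |advantage ε r j - advantage ε r' j| ≤ 3 * R ^ 2 / ε ^ 2 + 3 * R / ε := by
  have hn0 : 0 < n := by omega
  have hn' : (0:ℝ) < n := by exact_mod_cast hn0
  set m := sampleMean r with hm
  set m' := sampleMean r' with hm'
  set s := sampleStd r with hs
  set s' := sampleStd r' with hs'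
  have hs0 : 0 ≤ s := Real.sqrt_nonneg _
  have hs0' : 0 ≤ s' := Real.sqrt_nonneg _
  have hd : 0 < s + ε := by linarith
  have hd' : 0 < s' + ε := by linarith
  have hmR := sampleMean_mem hn0 r hr
  have hmR' := sampleMean_mem hn0 r' hr'
  -- mean difference
  have hsumdiff : ∑ j, r j - ∑ j, r' j = r k - r' k := by
    rw [← Finset.sum_sub_distrib]
    apply Finset.sum_eq_single
    · intro b _ hb; rw [hrk b hb]; ring
    · intro h; exact absurd (Finset.mem_univ k) h
  have hmdiff : m - m' = (r k - r' k) / n := by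
    rw [hm, hm', sampleMean, sampleMean, div_sub_div_same, hsumdiff]
  have hkR : |r k - r' k| ≤ R := by
    rw [abs_le]
    constructor <;> linarith [(hr k).1, (hr k).2, (hr' k).1, (hr' k).2]
  have hmd : |m - m'| ≤ R / n := by
    rw [hmdiff, abs_div, abs_of_pos hn']
    gcongr
  -- variance difference
  have hsumsq : ∑ j, (r j) ^ 2 - ∑ j, (r' j) ^ 2 = (r k) ^ 2 - (r' k) ^ 2 := by
    rw [← Finset.sum_sub_distrib]
    apply Finset.sum_eq_single
    · intro b _ hb; rw [hrk b hb]; ring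
    · intro h; exact absurd (Finset.mem_univ k) h
  have hssq : s ^ 2 = (∑ j, (r j) ^ 2 - n * m ^ 2) / n := by
    rw [hs, sampleStd_sq, variance_identity hn0, ← hm]
  have hssq' : s' ^ 2 = (∑ j, (r' j) ^ 2 - n * m' ^ 2) / n := by
    rw [hs', sampleStd_sq, variance_identity hn0, ← hm']
  have hk2 : |(r k) ^ 2 - (r' k) ^ 2| ≤ R ^ 2 := by
    have h1 := (hr k).1; have h2 := (hr k).2
    have h3 := (hr' k).1; have h4 := (hr' k).2
    rw [abs_le]; constructor <;> nlinarith
  have hm2 : |m ^ 2 - m' ^ 2| ≤ 2 * R ^ 2 / n := by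
    have habs : |m ^ 2 - m' ^ 2| = |m - m'| * |m + m'| := by
      rw [← abs_mul]; ring_nf
    rw [habs]
    have hmm : |m + m'| ≤ 2 * R := by
      rw [abs_le]; constructor <;> linarith [hmR.1, hmR.2, hmR'.1, hmR'.2]
    calc |m - m'| * |m + m'| ≤ (R / n) * (2 * R) :=
          mul_le_mul hmd hmm (abs_nonneg _) (by positivity)
      _ = 2 * R ^ 2 / n := by ring
  have hsqdiff : |s ^ 2 - s' ^ 2| ≤ 3 * R ^ 2 / n := by
    have h1 : s ^ 2 - s' ^ 2 = ((r k) ^ 2 - (r' k) ^ 2) / n - (m ^ 2 - m' ^ 2) := by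
      rw [hssq, hssq']
      have := hsumsq
      field_simp
      linarith
    rw [h1]
    have habs : |((r k) ^ 2 - (r' k) ^ 2) / n| ≤ R ^ 2 / n := by
      rw [abs_div, abs_of_pos hn']; gcongr
    calc |((r k) ^ 2 - (r' k) ^ 2) / n - (m ^ 2 - m' ^ 2)|
        ≤ |((r k) ^ 2 - (r' k) ^ 2) / n| + |m ^ 2 - m' ^ 2| := abs_sub _ _
      _ ≤ R ^ 2 / n + 2 * R ^ 2 / n := add_le_add habs hm2
      _ = 3 * R ^ 2 / n := by ring
  -- Cauchy-Schwarz
  have hCS : ∑ j, |r' j - m'| ≤ n * s' := by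
    rw [hm', hs']; exact sum_abs_le_card_mul_std hn0 r'
  -- pointwise decomposition
  have hpt : ∀ j, |advantage ε r j - advantage ε r' j| ≤
      |(r j - m) - (r' j - m')| / (s + ε) +
        |r' j - m'| * |s - s'| / ((s + ε) * (s' + ε)) := by
    intro j
    have heq : advantage ε r j - advantage ε r' j =
        ((r j - m) - (r' j - m')) / (s + ε) +
          (r' j - m') * (s' - s) / ((s + ε) * (s' + ε)) := by
      rw [advantage, advantage, ← hm, ← hm', ← hs, ← hs']
      field_simp
      ring
    rw [heq]
    calc |((r j - m) - (r' j - m')) / (s + ε) +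
          (r' j - m') * (s' - s) / ((s + ε) * (s' + ε))|
        ≤ |((r j - m) - (r' j - m')) / (s + ε)| +
          |(r' j - m') * (s' - s) / ((s + ε) * (s' + ε))| := abs_add_le _ _
      _ = |(r j - m) - (r' j - m')| / (s + ε) +
          |r' j - m'| * |s - s'| / ((s + ε) * (s' + ε)) := by
          rw [abs_div, abs_div, abs_mul, abs_of_pos hd, abs_of_pos (mul_pos hd hd'),
            abs_sub_comm s' s]
  -- bound the first sum
  have hsum1 : ∑ j, |(r j - m) - (r' j - m')| ≤ 2 * R := by
    rw [← Finset.add_sum_erase _ _ (Finset.mem_univ k)]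
    have hterm_k : |(r k - m) - (r' k - m')| ≤ R + R / n := by
      have h1 : (r k - m) - (r' k - m') = (r k - r' k) - (m - m') := by ring
      rw [h1]
      calc |(r k - r' k) - (m - m')| ≤ |r k - r' k| + |m - m'| := abs_sub _ _
        _ ≤ R + R / n := add_le_add hkR hmd
    have hrest : ∑ j ∈ Finset.univ.erase k, |(r j - m) - (r' j - m')|
        ≤ (n - 1 : ℝ) * (R / n) := by
      have hb : ∀ j ∈ Finset.univ.erase k, |(r j - m) - (r' j - m')| ≤ R / n := by
        intro j hj
        rw [hrk j (Finset.ne_of_mem_erase hj)]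
        have h1 : (r j - m) - (r j - m') = -(m - m') := by ring
        rw [h1, abs_neg]
        exact hmd
      calc ∑ j ∈ Finset.univ.erase k, |(r j - m) - (r' j - m')|
          ≤ ∑ _j ∈ Finset.univ.erase k, (R / n) := Finset.sum_le_sum hb
        _ = ((Finset.univ.erase k).card : ℝ) * (R / n) := by
            rw [Finset.sum_const, nsmul_eq_mul]
        _ = (n - 1 : ℝ) * (R / n) := by
            rw [Finset.card_erase_of_mem (Finset.mem_univ k), Finset.card_univ,
              Fintype.card_fin, Nat.cast_sub hn0, Nat.cast_one]
    have hfinal : (R + R / n) + (n - 1 : ℝ) * (R / n) = 2 * R := by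
      field_simp
      ring
    linarith
  -- bound the second factor
  have hkey : (∑ j, |r' j - m'|) * |s - s'| ≤ 3 * R ^ 2 := by
    have habs2 : |s ^ 2 - s' ^ 2| = |s - s'| * (s + s') := by
      rw [show s ^ 2 - s' ^ 2 = (s - s') * (s + s') by ring, abs_mul,
        abs_of_nonneg (by linarith : (0:ℝ) ≤ s + s')]
    have h2 : s' * |s - s'| ≤ |s ^ 2 - s' ^ 2| := by
      rw [habs2]
      calc s' * |s - s'| ≤ (s + s') * |s - s'| :=
            mul_le_mul_of_nonneg_right (by linarith) (abs_nonneg _)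
        _ = |s - s'| * (s + s') := mul_comm _ _
    calc (∑ j, |r' j - m'|) * |s - s'| ≤ (n * s') * |s - s'| :=
          mul_le_mul_of_nonneg_right hCS (abs_nonneg _)
      _ = n * (s' * |s - s'|) := by ring
      _ ≤ n * |s ^ 2 - s' ^ 2| := mul_le_mul_of_nonneg_left h2 hn'.le
      _ ≤ n * (3 * R ^ 2 / n) := mul_le_mul_of_nonneg_left hsqdiff hn'.le
      _ = 3 * R ^ 2 := by field_simp
  -- put it together
  have hmain : ∑ j, |advantage ε r j - advantage ε r' j| ≤
      (∑ j, |(r j - m) - (r' j - m')|) / (s + ε) +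
        (∑ j, |r' j - m'|) * |s - s'| / ((s + ε) * (s' + ε)) := by
    calc ∑ j, |advantage ε r j - advantage ε r' j|
        ≤ ∑ j, (|(r j - m) - (r' j - m')| / (s + ε) +
            |r' j - m'| * |s - s'| / ((s + ε) * (s' + ε))) :=
          Finset.sum_le_sum fun j _ => hpt j
      _ = (∑ j, |(r j - m) - (r' j - m')|) / (s + ε) +
            (∑ j, |r' j - m'|) * |s - s'| / ((s + ε) * (s' + ε)) := by
          rw [Finset.sum_add_distrib, ← Finset.sum_div, ← Finset.sum_div,
            ← Finset.sum_mul]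
  have hb1 : (∑ j, |(r j - m) - (r' j - m')|) / (s + ε) ≤ 2 * R / ε :=
    div_le_div₀ (by positivity) hsum1 hε (by linarith)
  have hb2 : (∑ j, |r' j - m'|) * |s - s'| / ((s + ε) * (s' + ε)) ≤
      3 * R ^ 2 / ε ^ 2 := by
    apply div_le_div₀ (by positivity) hkey (by positivity)
    calc ε ^ 2 = ε * ε := sq ε
      _ ≤ (s + ε) * (s' + ε) :=
          mul_le_mul (by linarith) (by linarith) hε.le (by linarith)
  have hRε : 0 ≤ R / ε := by positivity
  have : 2 * R / ε + R / ε = 3 * R / ε := by ring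
  linarith
end

section
/- Fix a finite arm set 𝒩, costs V_b : 𝒩 → [0, V_max] for each bin b ∈ {1,…,B}, compute costs a : 𝒩 → [0, a_max], a probability vector q̄ ∈ Δ_B, a budget n̄ ∈ ℝ, and a truncation μ_max > 0. For p = (p_1,…,p_B) with each p_b ∈ Δ_𝒩 and μ ∈ [0, μ_max], define the truncated Lagrangian L(p, μ) = Σ_b q̄_b Σ_n p_b(n) V_b(n) + μ ( Σ_b q̄_b Σ_n p_b(n) a(n) − n̄ ). Suppose p̄ and μ̄ ∈ [0, μ_max] satisfy max_{μ ∈ [0, μ_max]} L(p̄, μ) − min_{p} L(p, μ̄) ≤ Gap, and suppose p* is budget-feasible: Σ_b q̄_b Σ_n p*_b(n) a(n) ≤ n̄. Then (i) the objective gap satisfies Σ_b q̄_b Σ_n p̄_b(n) V_b(n) − Σ_b q̄_b Σ_n p*_b(n) V_b(n) ≤ Gap, and (ii) the budget violation satisfies max( Σ_b q̄_b Σ_n p̄_b(n) a(n) − n̄, 0 ) ≤ ( Σ_b q̄_b Σ_n p*_b(n) V_b(n) + Gap ) / μ_max ≤ ( V_max + Gap ) / μ_max. -/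
open Real Finset

/-- The probability simplex over a finite type. -/
def IsSimplexOn {α : Type*} [Fintype α] (p : α → ℝ) : Prop :=
  (∀ x, 0 ≤ p x) ∧ ∑ x, p x = 1

/-- Near-optimality and near-feasibility from a truncated-Lagrangian
saddle-point gap. With `L(p, μ) = ∑_b q̄_b ∑_n p_b(n) V_b(n) + μ (∑_b q̄_b ∑_n p_b(n) a(n) − n̄)`,
if `(p̄, μ̄)` has saddle gap at most `Gap` and `p*` is budget-feasible, then
(i) the objective gap of `p̄` versus `p*` is at most `Gap`, and
(ii) the budget violation of `p̄` is at most `(∑_b q̄_b ∑_n p*_b(n) V_b(n) + Gap)/μ_max ≤ (V_max + Gap)/μ_max`. -/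
theorem truncated_lagrangian_gap_to_optimality {𝒩 : Type*} [Fintype 𝒩] {B : ℕ}
    (Vmax amax : ℝ) (hVmax : 0 ≤ Vmax) (hamax : 0 ≤ amax)
    (V : Fin B → 𝒩 → ℝ) (hV : ∀ b n, V b n ∈ Set.Icc 0 Vmax)
    (a : 𝒩 → ℝ) (ha : ∀ n, a n ∈ Set.Icc 0 amax)
    (qbar : Fin B → ℝ) (hqbar : IsSimplexOn qbar)
    (nbar : ℝ) (μmax : ℝ) (hμmax : 0 < μmax)
    (L : (Fin B → 𝒩 → ℝ) → ℝ → ℝ)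
    (hL : ∀ p μ, L p μ =
      (∑ b, qbar b * ∑ n, p b n * V b n) +
        μ * ((∑ b, qbar b * ∑ n, p b n * a n) - nbar))
    (pbar : Fin B → 𝒩 → ℝ) (hpbar : ∀ b, IsSimplexOn (pbar b))
    (μbar : ℝ) (hμbar : μbar ∈ Set.Icc 0 μmax)
    (Gap : ℝ)
    (hgap : ∀ (p : Fin B → 𝒩 → ℝ), (∀ b, IsSimplexOn (p b)) →
      ∀ μ ∈ Set.Icc (0 : ℝ) μmax, L pbar μ - L p μbar ≤ Gap)
    (pstar : Fin B → 𝒩 → ℝ) (hpstar : ∀ b, IsSimplexOn (pstar b))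
    (hfeas : (∑ b, qbar b * ∑ n, pstar b n * a n) ≤ nbar) :
    ((∑ b, qbar b * ∑ n, pbar b n * V b n) -
        (∑ b, qbar b * ∑ n, pstar b n * V b n) ≤ Gap) ∧
    (max ((∑ b, qbar b * ∑ n, pbar b n * a n) - nbar) 0 ≤
        ((∑ b, qbar b * ∑ n, pstar b n * V b n) + Gap) / μmax) ∧
    (((∑ b, qbar b * ∑ n, pstar b n * V b n) + Gap) / μmax ≤ (Vmax + Gap) / μmax) := by
  -- abbreviations via `have`s
  have fnonneg : ∀ (p : Fin B → 𝒩 → ℝ), (∀ b, IsSimplexOn (p b)) →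
      0 ≤ ∑ b, qbar b * ∑ n, p b n * V b n := by
    intro p hp
    apply Finset.sum_nonneg
    intro b _
    apply mul_nonneg (hqbar.1 b)
    apply Finset.sum_nonneg
    intro n _
    exact mul_nonneg ((hp b).1 n) (hV b n).1
  have fle : ∀ (p : Fin B → 𝒩 → ℝ), (∀ b, IsSimplexOn (p b)) →
      (∑ b, qbar b * ∑ n, p b n * V b n) ≤ Vmax := by
    intro p hp
    calc (∑ b, qbar b * ∑ n, p b n * V b n)
        ≤ ∑ b, qbar b * Vmax := by
          apply Finset.sum_le_sum
          intro b _
          apply mul_le_mul_of_nonneg_left _ (hqbar.1 b)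
          calc (∑ n, p b n * V b n) ≤ ∑ n, p b n * Vmax := by
                apply Finset.sum_le_sum
                intro n _
                exact mul_le_mul_of_nonneg_left (hV b n).2 ((hp b).1 n)
            _ = Vmax := by rw [← Finset.sum_mul, (hp b).2, one_mul]
      _ = Vmax := by rw [← Finset.sum_mul, hqbar.2, one_mul]
  have hGap0 : 0 ≤ Gap := by
    have := hgap pbar hpbar μbar hμbar
    linarith
  -- g pstar ≤ 0
  have hgs : (∑ b, qbar b * ∑ n, pstar b n * a n) - nbar ≤ 0 := by linarith
  have hμbarg : μbar * ((∑ b, qbar b * ∑ n, pstar b n * a n) - nbar) ≤ 0 :=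
    mul_nonpos_of_nonneg_of_nonpos hμbar.1 hgs
  -- (i)
  have h1 : (∑ b, qbar b * ∑ n, pbar b n * V b n) -
      (∑ b, qbar b * ∑ n, pstar b n * V b n) ≤ Gap := by
    have := hgap pstar hpstar 0 ⟨le_refl 0, le_of_lt hμmax⟩
    rw [hL, hL] at this
    linarith
  -- (ii)
  have h2 : max ((∑ b, qbar b * ∑ n, pbar b n * a n) - nbar) 0 ≤
      ((∑ b, qbar b * ∑ n, pstar b n * V b n) + Gap) / μmax := by
    rcases le_or_gt ((∑ b, qbar b * ∑ n, pbar b n * a n) - nbar) 0 with h | h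
    · rw [max_eq_right h]
      apply div_nonneg _ (le_of_lt hμmax)
      have := fnonneg pstar hpstar
      linarith
    · rw [max_eq_left (le_of_lt h)]
      have := hgap pstar hpstar μmax ⟨le_of_lt hμmax, le_refl μmax⟩
      rw [hL, hL] at this
      have hfb := fnonneg pbar hpbar
      rw [le_div_iff₀ hμmax]
      nlinarith
  refine ⟨h1, h2, ?_⟩
  gcongr
  · have := fle pstar hpstar
    linarith
end
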